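/- arXiv:1810.08752 — 3 statements merged into one kernel-verified Lean document; each statement's English description precedes it below -/
import Mathlib

section
/- In a Grothendieck category, the canonical morphism from the direct sum ⊕_{i∈I} M_i to the direct product ∏_{i∈I} M_i of a small family of objects is a monomorphism. -/
open CategoryTheory Limits Classical

/-- The canonical morphism from a direct sum to the direct product of a family of
objects, whose component from the `i`-th summand to the `j`-th factor is the
identity if `i = j` and zero otherwise. -/
noncomputable def coproductToProductMap {C : Type u} [Category.{v} C] [Abelian C]
    [HasLimits C] [HasColimits C] {I : Type v} (M : I → C) : (∐ M) ⟶ (∏ᶜ M) :=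
  Sigma.desc fun i => Pi.lift fun j =>
    if h : i = j then eqToHom (congrArg M h) else 0

/-!
`∐ M` is the filtered colimit of its finite subcoproducts `∐_{i ∈ S} M i`. Restricted to such a
subcoproduct, the canonical map followed by the projection `∏ M ⟶ ∏_{i ∈ S} M i` is the
identification of the finite biproduct, so it is a monomorphism. By AB5, a morphism out of a
filtered colimit is a monomorphism as soon as all its restrictions are.
-/

open CoproductsFromFiniteFiltered

lemma CategoryTheory.Limits.IsColimit.mono_of_forall_mono_ι_app_comp {C : Type*} [Category C]
    {J : Type*} [Category J] [IsConnected J] [HasColimitsOfShape J C]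
    [(colim : (J ⥤ C) ⥤ C).PreservesMonomorphisms] {X : J ⥤ C} {c : Cocone X}
    (hc : IsColimit c) {Y : C} (f : c.pt ⟶ Y) (hf : ∀ j, Mono (c.ι.app j ≫ f)) : Mono f := by
  have : ∀ j, Mono ((c.extend f).ι.app j) := hf
  have : Mono (c.extend f).ι := NatTrans.mono_of_mono_app _
  exact colim.map_mono' (c.extend f).ι hc (isColimitConstCocone J Y) f
    fun j => (Category.comp_id (c.ι.app j ≫ f)).symm

section

variable {C : Type u} [Category.{v} C] [Abelian C] [HasLimits C] [HasColimits C]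
  {I : Type v} (M : I → C)

lemma ι_coproductToProductMap_π (i j : I) :
    Sigma.ι M i ≫ coproductToProductMap M ≫ Pi.π M j =
      if h : i = j then eqToHom (congrArg M h) else 0 := by
  simp [coproductToProductMap]

lemma mono_sigmaDesc_ι_comp_coproductToProductMap (S : Finset (Discrete I)) :
    Mono (Sigma.desc (fun x : S => Sigma.ι M x.1.as) ≫ coproductToProductMap M) := by
  have : HasFiniteBiproducts C := Abelian.hasFiniteBiproducts
  have h : (Sigma.desc (fun x : S => Sigma.ι M x.1.as) ≫ coproductToProductMap M) ≫
      Pi.lift (fun x : S => Pi.π M x.1.as) =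
      ((biproduct.isoCoproduct fun x : S => M x.1.as).symm ≪≫ biproduct.isoProduct _).hom := by
    refine Sigma.hom_ext _ _ fun x => Pi.hom_ext _ _ fun y => ?_
    have hxy : x.1.as = y.1.as ↔ x = y := by rw [← Discrete.ext_iff, ← Subtype.ext_iff]
    simp [ι_coproductToProductMap_π, biproduct.isoCoproduct_inv, biproduct.isoProduct_hom,
      biproduct.ι_π, hxy]
  exact mono_of_mono_fac h

end

theorem stmt_2_general (C : Type u) [Category.{v} C] [Abelian C] [HasLimits C] [HasColimits C]
    [AB5 C] {I : Type v} (M : I → C) :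
    Mono (coproductToProductMap M) := by
  have := IsFiltered.isConnected (Finset (Discrete I))
  exact (isColimitFiniteSubproductsCocone M).mono_of_forall_mono_ι_app_comp _
    (mono_sigmaDesc_ι_comp_coproductToProductMap M)

/-- In a Grothendieck category (abelian, Ab5, with a generator), the canonical
morphism `⊕ᵢ Mᵢ ⟶ ∏ᵢ Mᵢ` is a monomorphism. -/
theorem stmt_2 (C : Type u) [Category.{v} C] [Abelian C] [HasLimits C] [HasColimits C]
    [AB5 C] (G : C) (hG : IsSeparator G) {I : Type v} (M : I → C) :
    Mono (coproductToProductMap M) :=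
  stmt_2_general C M
end

section
/- Let G be a Grothendieck category that has enough projectives. Then G satisfies Ab4*, i.e., direct products of short exact sequences in G are exact. -/
open CategoryTheory Limits

/-- A projective cover `P ↠ lim Y` lifts componentwise along the epimorphisms `X j ↠ Y j`, and
over a discrete shape these lifts form a cone over `X` with no compatibility to check. -/
lemma epi_limMap_of_enoughProjectives {C : Type*} [Category C] [EnoughProjectives C] {α : Type*}
    {X Y : Discrete α ⥤ C} [HasLimit X] [HasLimit Y] (η : X ⟶ Y) [∀ j, Epi (η.app j)] :
    Epi (limMap η) := by
  let c : Cone X := ⟨Projective.over (limit Y), Discrete.natTrans fun j ↦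
    (Projective.factorThru (Projective.π (limit Y) ≫ limit.π Y j) (η.app j) :
      Projective.over (limit Y) ⟶ X.obj j)⟩
  have hlift : limit.lift X c ≫ limMap η = Projective.π (limit Y) := by
    ext j
    simp [c]
  have : Epi (limit.lift X c ≫ limMap η) := hlift ▸ inferInstance
  exact epi_of_epi (limit.lift X c) (limMap η)

instance preservesEpimorphisms_lim_discrete_of_enoughProjectives {C : Type*} [Category C]
    [HasPushouts C] [EnoughProjectives C] (α : Type*) [HasLimitsOfShape (Discrete α) C] :
    (lim : (Discrete α ⥤ C) ⥤ C).PreservesEpimorphisms where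
  preserves η _ := epi_limMap_of_enoughProjectives η

theorem stmt_3_general (G : Type u) [Category.{v} G] [Abelian G] [HasLimits G]
    [EnoughProjectives G] : AB4Star G :=
  ⟨fun α ↦ hasExactLimitsOfShape_of_preservesEpi G (Discrete α)⟩

/-- A Grothendieck category (abelian, Ab5, with a generator) that has enough
projectives satisfies Ab4*: direct products of short exact sequences are exact. -/
theorem stmt_3 (G : Type u) [Category.{v} G] [Abelian G] [HasLimits G] [HasColimits G]
    [AB5 G] (U : G) (hU : IsSeparator U) [EnoughProjectives G] : AB4Star G :=
  stmt_3_general G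
end

section
/- Let G be a Grothendieck category and X ⊆ G a localizing subcategory. Then X is closed under small direct products if and only if every object M of G has a smallest subobject L among those satisfying M/L ∈ X (equivalently, a largest quotient object belonging to X). -/
open CategoryTheory Limits

/-- The class of morphisms whose kernel and cokernel lie in a class of objects `P`. -/
def serreW {C : Type u} [Category.{v} C] [Abelian C] (P : C → Prop) :
    MorphismProperty C :=
  fun _ _ f => P (kernel f) ∧ P (cokernel f)

/-!
If `P` is closed under products, the kernel of `M ⟶ ∏ M/L'`, over the set of subobjects `L'`
with `M/L' ∈ P` (small by well-poweredness), is the smallest such subobject: its quotient embeds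
into the product. Conversely, the smallest such subobject of `∏ M i` lies in the kernel of every
projection, so it is zero and `∏ M i` itself is in `P`.
-/

namespace CategoryTheory.Abelian

variable {C : Type u} [Category.{v} C] [Abelian C]

lemma kernelSubobject_pi_lift_cokernel_le {M : C} {ι : Type v} (L : ι → Subobject M)
    [HasProduct fun i => cokernel (L i).arrow] (i : ι) :
    kernelSubobject (Pi.lift fun i => cokernel.π (L i).arrow) ≤ L i := by
  have hzero : (kernelSubobject (Pi.lift fun i => cokernel.π (L i).arrow)).arrow ≫
      cokernel.π (L i).arrow = 0 := by
    rw [← Pi.lift_π (fun i => cokernel.π (L i).arrow) i, ← Category.assoc,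
      kernelSubobject_arrow_comp, zero_comp]
  exact Subobject.le_of_comm (monoLift (L i).arrow _ hzero) (by simp)

lemma subobject_arrow_eq_zero_of_le_kernelSubobject_π {ι : Type v} {M : ι → C}
    [HasProduct M] {L : Subobject (∏ᶜ M)} (hL : ∀ i, L ≤ kernelSubobject (Pi.π M i)) :
    L.arrow = 0 :=
  Pi.hom_ext _ _ fun i => by
    rw [zero_comp, ← Subobject.ofLE_arrow (hL i), Category.assoc, kernelSubobject_arrow_comp,
      comp_zero]

variable {P : C → Prop} (hsub : ∀ ⦃X Y : C⦄ (f : X ⟶ Y), Mono f → P Y → P X)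
include hsub

/-- `A / ker f` is the coimage of `f`, which embeds into `B`. -/
lemma prop_cokernel_kernelSubobject_arrow {A B : C} (f : A ⟶ B) (hB : P B) :
    P (cokernel (kernelSubobject f).arrow) := by
  let e : cokernel (kernelSubobject f).arrow ≅ Abelian.coimage f :=
    cokernel.mapIso _ (kernel.ι f) (kernelSubobjectIso f) (Iso.refl A) (by simp)
  exact hsub (e.hom ≫ (Abelian.coimageIsoImage f).hom ≫ Abelian.image.ι f) inferInstance hB

lemma prop_of_subobject_arrow_eq_zero {M : C} {L : Subobject M} (hL : P (cokernel L.arrow))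
    (h : L.arrow = 0) : P M :=
  hsub (cokernelIsoOfEq h ≪≫ cokernelZeroIsoTarget).inv inferInstance hL

lemma exists_least_subobject_prop_cokernel [HasProducts.{v} C] [WellPowered.{v} C]
    (hprod : ∀ (I : Type v) (M : I → C), (∀ i, P (M i)) → P (∏ᶜ M)) (M : C) :
    ∃ L : Subobject M, P (cokernel L.arrow) ∧
      ∀ L' : Subobject M, P (cokernel L'.arrow) → L ≤ L' := by
  let S := { L' : Subobject M // P (cokernel L'.arrow) }
  have : Small.{v} S := inferInstance
  let L : Shrink.{v} S → Subobject M := fun i => ((equivShrink S).symm i).1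
  refine ⟨kernelSubobject (Pi.lift fun i => cokernel.π (L i).arrow),
    prop_cokernel_kernelSubobject_arrow hsub _
      (hprod _ _ fun i => ((equivShrink S).symm i).2), fun L' hL' => ?_⟩
  simpa [L] using kernelSubobject_pi_lift_cokernel_le L (equivShrink S ⟨L', hL'⟩)

lemma prop_pi_of_exists_least_subobject
    (hmin : ∀ M : C, ∃ L : Subobject M, P (cokernel L.arrow) ∧
      ∀ L' : Subobject M, P (cokernel L'.arrow) → L ≤ L')
    {I : Type v} (M : I → C) [HasProduct M] (hM : ∀ i, P (M i)) : P (∏ᶜ M) := by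
  obtain ⟨L, hL, hLmin⟩ := hmin (∏ᶜ M)
  exact prop_of_subobject_arrow_eq_zero hsub hL <|
    subobject_arrow_eq_zero_of_le_kernelSubobject_π fun i =>
      hLmin _ (prop_cokernel_kernelSubobject_arrow hsub _ (hM i))

end CategoryTheory.Abelian

theorem stmt_6_general (G : Type u) [Category.{v} G] [Abelian G] [HasLimits G]
    (U : G) (hU : IsSeparator U) (P : G → Prop)
    (hsub : ∀ ⦃X Y : G⦄ (f : X ⟶ Y), Mono f → P Y → P X) :
    (∀ (I : Type v) (M : I → G), (∀ i, P (M i)) → P (∏ᶜ M)) ↔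
      ∀ M : G, ∃ L : Subobject M, P (cokernel L.arrow) ∧
        ∀ L' : Subobject M, P (cokernel L'.arrow) → L ≤ L' := by
  have : WellPowered.{v} G := wellPowered_of_isDetector U hU.isDetector
  exact ⟨fun hprod => Abelian.exists_least_subobject_prop_cokernel hsub hprod,
    fun hmin _ M => Abelian.prop_pi_of_exists_least_subobject hsub hmin M⟩

/-- Let `G` be a Grothendieck category and `P` a localizing subcategory (a Serre
subcategory such that the quotient functor admits a right adjoint).  Then `P` is
closed under small direct products if and only if every object `M` has a smallest
subobject `L` among those with `M/L ∈ P` (i.e. a largest quotient in `P`). -/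
theorem stmt_6 (G : Type u) [Category.{v} G] [Abelian G] [HasLimits G] [HasColimits G]
    [AB5 G] (U : G) (hU : IsSeparator U) (P : G → Prop)
    (hsub : ∀ ⦃X Y : G⦄ (f : X ⟶ Y), Mono f → P Y → P X)
    (hquot : ∀ ⦃X Y : G⦄ (f : X ⟶ Y), Epi f → P X → P Y)
    (hext : ∀ (S : ShortComplex G), S.ShortExact → P S.X₁ → P S.X₃ → P S.X₂)
    (hloc : (serreW P).Q.IsLeftAdjoint) :
    (∀ (I : Type v) (M : I → G), (∀ i, P (M i)) → P (∏ᶜ M)) ↔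
      ∀ M : G, ∃ L : Subobject M, P (cokernel L.arrow) ∧
        ∀ L' : Subobject M, P (cokernel L'.arrow) → L ≤ L' :=
  stmt_6_general G U hU P hsub
end
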